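/- Suppose f : X → Y is a radial function between proper δ-hyperbolic geodesic spaces. If the induced map tilde f : ∂X → ∂Y between sequential boundaries is surjective and Y is visual, then f is coarsely surjective. -/

import Mathlib

/-!
Given `y ∈ Y`, visuality gives a ray `η` from `f a` passing within `2D + δ/2` of `y`, at time
`R = d(y, f a)`. By surjectivity of the boundary map, the end of `η` is the class of `f ∘ x` for a
sequence `x` converging to infinity in `X`; hence for `n` large the geodesic `τ` from `f a` to
`f (x n)` fellow-travels `η` up to time `R`. Along a geodesic from `a` to `x n`, `f` is a discrete
quasi-geodesic (this is radiality), so by the Morse lemma `τ` stays uniformly close to `f (X)`.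
The same Morse estimate gives `(f x, f x')_{f a} ≥ λ₂ (x, x')_a - C`, which is what makes `f ∘ x`
converge to infinity in the first place.
-/

open Filter Metric Set

noncomputable section

namespace Gromov

variable {X : Type*} [MetricSpace X] {Y : Type*} [MetricSpace Y]

/-- The Gromov product `(x,y)_a = (d(x,a)+d(y,a)-d(x,y))/2`. -/
def gp (a x y : X) : ℝ := (dist x a + dist y a - dist x y) / 2

/-- Gromov `δ`-hyperbolicity via the `δ/4`-inequality. -/
def IsDeltaHyperbolic (X : Type*) [MetricSpace X] (δ : ℝ) : Prop :=
  ∀ x y z w : X, gp w x y ≥ min (gp w x z) (gp w z y) - δ / 4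

/-- `γ` is a geodesic starting at `x`, parametrized by arclength on `[0, M]`. -/
def IsGeodesicOn (γ : ℝ → X) (x : X) (M : ℝ) : Prop :=
  γ 0 = x ∧ ∀ s ∈ Icc (0:ℝ) M, ∀ t ∈ Icc (0:ℝ) M, dist (γ s) (γ t) = |s - t|

/-- Every two points are joined by a geodesic. -/
def IsGeodesicSpace (X : Type*) [MetricSpace X] : Prop :=
  ∀ x y : X, ∃ γ : ℝ → X, IsGeodesicOn γ x (dist x y) ∧ γ (dist x y) = y

/-- An infinite geodesic ray emanating from `x`. -/
def IsRay (γ : ℝ → X) (x : X) : Prop :=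
  γ 0 = x ∧ ∀ s ∈ Ici (0:ℝ), ∀ t ∈ Ici (0:ℝ), dist (γ s) (γ t) = |s - t|

/-- `f` is `(l, μ)`-large scale Lipschitz. -/
def IsLSL (f : X → Y) (l μ : ℝ) : Prop :=
  ∀ x y : X, dist (f x) (f y) ≤ l * dist x y + μ

/-- `f` is large scale Lipschitz. -/
def LSL (f : X → Y) : Prop := ∃ l μ : ℝ, 0 < l ∧ 0 < μ ∧ IsLSL f l μ

/-- The `(l2, μ2)`-radial lower bound condition with respect to `x₀`:
on every finite geodesic emanating from `x₀`, `l2·d(x,y) - μ2 ≤ d(f(x),f(y))`. -/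
def IsRadialWith (f : X → Y) (x₀ : X) (l2 μ2 : ℝ) : Prop :=
  ∀ M, 0 ≤ M → ∀ γ : ℝ → X, IsGeodesicOn γ x₀ M →
    ∀ s ∈ Icc (0:ℝ) M, ∀ t ∈ Icc (0:ℝ) M,
      l2 * dist (γ s) (γ t) - μ2 ≤ dist (f (γ s)) (f (γ t))

/-- `f` is a radial function with respect to `x₀`. -/
def Radial (f : X → Y) (x₀ : X) : Prop :=
  LSL f ∧ ∃ l2 μ2 : ℝ, 0 < l2 ∧ 0 < μ2 ∧ IsRadialWith f x₀ l2 μ2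

/-- `f` is visual: for some basepoint `a`, `(x_n,y_n)_a → ∞` implies
`(f(x_n),f(y_n))_{f(a)} → ∞`. -/
def VisualFn (f : X → Y) : Prop :=
  ∃ a : X, ∀ x y : ℕ → X,
    Tendsto (fun n => gp a (x n) (y n)) atTop atTop →
    Tendsto (fun n => gp (f a) (f (x n)) (f (y n))) atTop atTop

/-- `liminf_{i,j→∞} (x_i,x_j)_a = ∞`: the sequence converges to infinity. -/
def ConvSeq (a : X) (x : ℕ → X) : Prop :=
  Tendsto (fun p : ℕ × ℕ => gp a (x p.1) (x p.2)) atTop atTop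

/-- `liminf_{i,j→∞} (x_i,y_j)_a = ∞`: the two sequences are equivalent. -/
def SeqEquiv (a : X) (x y : ℕ → X) : Prop :=
  Tendsto (fun p : ℕ × ℕ => gp a (x p.1) (y p.2)) atTop atTop

def BSeq (a : X) : Type _ := {x : ℕ → X // ConvSeq a x}

/-- The sequential boundary `∂X` with basepoint `a`. -/
def Boundary (a : X) : Type _ := Quot (fun x y : BSeq a => SeqEquiv a x.1 y.1)

/-- The boundary point represented by a sequence. -/
def bpt (a : X) (x : ℕ → X) (hx : ConvSeq a x) : Boundary a :=
  Quot.mk _ ⟨x, hx⟩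

/-- `liminf_{i,j→∞} (x_i,y_j)_a` as an extended real. -/
def gpSeqs (a : X) (x y : ℕ → X) : EReal :=
  liminf (fun p : ℕ × ℕ => ((gp a (x p.1) (y p.2)) : EReal)) atTop

/-- The basic neighborhood `U(p,r)` in the sequential boundary. -/
def U (a : X) (p : Boundary a) (r : ℝ) : Set (Boundary a) :=
  {q | ∃ (x y : ℕ → X) (hx : ConvSeq a x) (hy : ConvSeq a y),
    bpt a x hx = p ∧ bpt a y hy = q ∧ (r : EReal) ≤ gpSeqs a x y}

instance (a : X) : TopologicalSpace (Boundary a) :=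
  TopologicalSpace.generateFrom {s | ∃ p r, 0 < r ∧ s = U a p r}

/-- The union `X ∪ ∂X`. -/
def Comp (a : X) : Type _ := X ⊕ Boundary a

def Comp.inl {a : X} (x : X) : Comp a := Sum.inl x
def Comp.inr {a : X} (p : Boundary a) : Comp a := Sum.inr p

/-- The extension of `U(p,r)` to `X ∪ ∂X`. -/
def UFull (a : X) (p : Boundary a) (r : ℝ) : Set (Comp a) :=
  {z : X ⊕ Boundary a | Sum.elim
    (fun x : X => ∃ (s : ℕ → X) (hs : ConvSeq a s), bpt a s hs = p ∧
      (r : EReal) ≤ liminf (fun i : ℕ => ((gp a (s i) x) : EReal)) atTop)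
    (fun q : Boundary a => q ∈ U a p r) z}

instance (a : X) : TopologicalSpace (Comp a) :=
  TopologicalSpace.generateFrom
    ({s | ∃ u : Set X, IsOpen u ∧ s = Comp.inl '' u} ∪
     {s | ∃ p r, 0 < r ∧ s = UFull a p r})

/-- The Gromov product of two boundary points:
`(p,q)_a = inf liminf_{i→∞} (x_i,y_i)_a` over representatives. -/
def gpBoundary (a : X) (p q : Boundary a) : EReal :=
  sInf {e : EReal | ∃ (x y : ℕ → X) (hx : ConvSeq a x) (hy : ConvSeq a y),
    bpt a x hx = p ∧ bpt a y hy = q ∧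
    e = liminf (fun i : ℕ => ((gp a (x i) (y i)) : EReal)) atTop}

/-- `K^{-e}` for an extended real exponent `e` (with `K^{-∞} = 0`). -/
def negPow (K : ℝ) (e : EReal) : ℝ :=
  if e = ⊤ then 0 else if e = ⊥ then 0 else Real.rpow K (-(e.toReal))

/-- `d` is a visual metric on `∂X` with parameters `K, C > 1`. -/
def IsVisualMetric (a : X) (d : Boundary a → Boundary a → ℝ) (K C : ℝ) : Prop :=
  1 < K ∧ 1 < C ∧ ∀ p q : Boundary a,
    negPow K (gpBoundary a p q) / C ≤ d p q ∧ d p q ≤ C * negPow K (gpBoundary a p q)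

/-- A map between sets with distinguished distance functions is Hölder. -/
def IsHolder {A B : Type*} (dA : A → A → ℝ) (dB : B → B → ℝ) (g : A → B) : Prop :=
  ∃ L α : ℝ, 0 < L ∧ 0 < α ∧ ∀ p q : A, dB (g p) (g q) ≤ L * Real.rpow (dA p q) α

/-- `(ξ₁,ξ₂)_a = liminf_{t→∞} (ξ₁(t),ξ₂(t))_a` for rays. -/
def gpRays (a : X) (ξ₁ ξ₂ : ℝ → X) : EReal :=
  liminf (fun t : ℝ => ((gp a (ξ₁ t) (ξ₂ t)) : EReal)) atTop

/-- The geodesic ray `ξ` represents the boundary point `p`. -/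
def RayRepresents (a : X) (ξ : ℝ → X) (p : Boundary a) : Prop :=
  ∃ h : ConvSeq a (fun n : ℕ => ξ n), bpt a (fun n : ℕ => ξ n) h = p

/-- `(x,ξ)_a = liminf_{n→∞} (x,ξ(n))_a`. -/
def gpPointRay (a x : X) (ξ : ℝ → X) : ℝ :=
  liminf (fun n : ℕ => gp a x (ξ n)) atTop

/-- `X` is a visual hyperbolic space with basepoint `a` and constant `D`. -/
def IsVisualSpace (a : X) (D : ℝ) : Prop :=
  ∀ x : X, ∃ ξ : ℝ → X, IsRay ξ a ∧ gpPointRay a x ξ > dist x a - D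

/-- A maximal finite geodesic from `a`: it admits no proper geodesic extension. -/
def MaximalGeodesic (ζ : ℝ → X) (a : X) (M : ℝ) : Prop :=
  IsGeodesicOn ζ a M ∧
    ¬ ∃ (M' : ℝ) (ζ' : ℝ → X), M < M' ∧ IsGeodesicOn ζ' a M' ∧
      ∀ t ∈ Icc (0:ℝ) M, ζ' t = ζ t

/-- `f : X → Y` is a radial extension with parameter `A` of `g : ∂X → ∂Y`
(`D` being the visuality constant of `X`). -/
def IsRadialExtension (a : X) (b : Y) (g : Boundary a → Boundary b)
    (A D : ℝ) (f : X → Y) : Prop :=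
  f a = b ∧
  ∀ x : X, x ≠ a →
    ((∃ (ξ : ℝ → X) (t : ℝ), IsRay ξ a ∧ 0 ≤ t ∧ ξ t = x) →
      ∃ (ξ : ℝ → X) (t : ℝ) (η : ℝ → Y), IsRay ξ a ∧ 0 ≤ t ∧ ξ t = x ∧ IsRay η b ∧
        (∃ p : Boundary a, RayRepresents a ξ p ∧ RayRepresents b η (g p)) ∧
        f x = η (A * t)) ∧
    ((¬ ∃ (ξ : ℝ → X) (t : ℝ), IsRay ξ a ∧ 0 ≤ t ∧ ξ t = x) →
      ∃ (M t : ℝ) (ζ ξ : ℝ → X) (η : ℝ → Y),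
        MaximalGeodesic ζ a M ∧ t ∈ Icc (0:ℝ) M ∧ ζ t = x ∧
        IsRay ξ a ∧ gpPointRay a (ζ M) ξ > dist (ζ M) a - D ∧ IsRay η b ∧
        (∃ p : Boundary a, RayRepresents a ξ p ∧ RayRepresents b η (g p)) ∧
        f x = η (A * t))

/-- `f` is coarsely surjective. -/
def CoarselySurjective (f : X → Y) : Prop :=
  ∃ S : ℝ, 0 < S ∧ ∀ y : Y, ∃ x : X, dist y (f x) ≤ S

/-- `f` is bornologous (coarse). -/
def Bornologous (f : X → Y) : Prop :=
  ∀ R : ℝ, 0 < R → ∃ S : ℝ, 0 < S ∧ ∀ x x' : X, dist x x' ≤ R → dist (f x) (f x') ≤ S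

/-- `f` is a coarse embedding. -/
def CoarseEmbedding (f : X → Y) : Prop :=
  Bornologous f ∧
    ∀ R : ℝ, 0 < R → ∃ S : ℝ, 0 < S ∧ ∀ x x' : X, dist (f x) (f x') ≤ R → dist x x' ≤ S

/-- `f` is coarsely `n`-to-1. -/
def CoarselyNto1 (f : X → Y) (n : ℕ) : Prop :=
  ∀ R : ℝ, 0 < R → ∃ S : ℝ, 0 < S ∧ ∀ A : Set Y, EMetric.diam A < ENNReal.ofReal R →
    ∃ B : Fin n → Set X, (f ⁻¹' A = ⋃ i, B i) ∧
      ∀ i, EMetric.diam (B i) < ENNReal.ofReal S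

/-- `g : ∂X → ∂Y` is the boundary map induced by `f`, i.e. `g [(x_n)] = [(f(x_n))]`. -/
def InducedBoundaryMap (a : X) (f : X → Y) (g : Boundary a → Boundary (f a)) : Prop :=
  ∀ (x : ℕ → X) (hx : ConvSeq a x) (hfx : ConvSeq (f a) (f ∘ x)),
    g (bpt a x hx) = bpt (f a) (f ∘ x) hfx

/-- `g` is (at most) `n`-to-1. -/
def NTo1 {A B : Type*} (g : A → B) (n : ℕ) : Prop :=
  ∀ b : B, ∃ s : Finset A, s.card ≤ n ∧ ∀ a : A, g a = b → a ∈ s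

/-- Covering dimension at most `n`: every open cover admits an open refinement
of multiplicity at most `n+1`. -/
def CovDimLE (Z : Type*) [TopologicalSpace Z] (n : ℕ) : Prop :=
  ∀ 𝒰 : Set (Set Z), (∀ u ∈ 𝒰, IsOpen u) → ⋃₀ 𝒰 = univ →
    ∃ 𝒱 : Set (Set Z), (∀ v ∈ 𝒱, IsOpen v) ∧ ⋃₀ 𝒱 = univ ∧
      (∀ v ∈ 𝒱, ∃ u ∈ 𝒰, v ⊆ u) ∧
      ∀ z : Z, {v ∈ 𝒱 | z ∈ v}.Finite ∧ {v ∈ 𝒱 | z ∈ v}.ncard ≤ n + 1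

/-- `c_{f,n}(r)`: the supremum of numbers `B` such that there exist `n+1` points
with mutual Gromov products `< r` whose images have mutual Gromov products `≥ B`. -/
def cfn (a : X) (b : Y) (f : X → Y) (n : ℕ) (r : ℝ) : EReal :=
  sSup {e : EReal | ∃ (B : ℝ) (x : Fin (n + 1) → X), e = (B : EReal) ∧
    (∀ i j, i ≠ j → gp a (x i) (x j) < r) ∧
    (∀ i j, i ≠ j → B ≤ gp b (f (x i)) (f (x j)))}

section GromovProduct

variable {Z : Type*} [MetricSpace Z]

lemma gp_comm (a x y : Z) : gp a x y = gp a y x := by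
  unfold gp; rw [dist_comm x y]; ring

lemma gp_nonneg (a x y : Z) : 0 ≤ gp a x y := by
  unfold gp; linarith [dist_triangle x a y, dist_comm a y]

lemma gp_le_dist_left (a x y : Z) : gp a x y ≤ dist x a := by
  unfold gp; linarith [dist_triangle y x a, dist_comm y x]

lemma gp_le_dist_right (a x y : Z) : gp a x y ≤ dist y a :=
  gp_comm a x y ▸ gp_le_dist_left a y x

lemma gp_add_gp_swap (a x y : Z) : gp a x y + gp x a y = dist a x := by
  unfold gp; rw [dist_comm x a, dist_comm y x, dist_comm y a]; ring

lemma IsDeltaHyperbolic.nonneg {δ : ℝ} (hZ : IsDeltaHyperbolic Z δ) (z : Z) : 0 ≤ δ := by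
  have h := hZ z z z z
  rw [min_self] at h
  linarith

lemma IsDeltaHyperbolic.sub_le_gp {δ t : ℝ} (hZ : IsDeltaHyperbolic Z δ) {w x y z : Z}
    (hxz : t ≤ gp w x z) (hzy : t ≤ gp w z y) : t - δ / 4 ≤ gp w x y := by
  linarith [hZ x y z w, le_min hxz hzy]

end GromovProduct

lemma image_comp_const_sub_Icc {α : Type*} (γ : ℝ → α) (L : ℝ) :
    (fun t => γ (L - t)) '' Icc 0 L = γ '' Icc 0 L := by
  rw [← image_image γ (fun t => L - t), image_const_sub_Icc]
  simp

section GeodesicSegment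

variable {Z : Type*} [MetricSpace Z]

lemma exists_farthest_point {S C : Set Z} (hS : IsCompact S) (hSne : S.Nonempty)
    (hC : IsCompact C) (hCne : C.Nonempty) :
    ∃ w ∈ S, ∃ E, (∀ p ∈ S, ∃ c ∈ C, dist p c ≤ E) ∧ ∀ c ∈ C, E ≤ dist w c := by
  obtain ⟨w, hw, hmax⟩ := hS.exists_isMaxOn hSne (continuous_infDist_pt C).continuousOn
  refine ⟨w, hw, infDist w C, fun p hp => ?_, fun c hc => infDist_le_dist_of_mem hc⟩
  obtain ⟨c, hc, hpc⟩ := hC.exists_infDist_eq_dist hCne p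
  exact ⟨c, hc, hpc ▸ hmax hp⟩

def IsGeodesicSegment (γ : ℝ → Z) (x y : Z) : Prop :=
  IsGeodesicOn γ x (dist x y) ∧ γ (dist x y) = y

lemma IsGeodesicSpace.exists_isGeodesicSegment (h : IsGeodesicSpace Z) (x y : Z) :
    ∃ γ, IsGeodesicSegment γ x y :=
  h x y

namespace IsGeodesicSegment

variable {γ : ℝ → Z} {x y : Z} {r s t : ℝ}

lemma dist_eq (h : IsGeodesicSegment γ x y) (hs : s ∈ Icc 0 (dist x y))
    (ht : t ∈ Icc 0 (dist x y)) : dist (γ s) (γ t) = |s - t| :=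
  h.1.2 s hs t ht

lemma dist_left (h : IsGeodesicSegment γ x y) (hs : s ∈ Icc 0 (dist x y)) :
    dist (γ s) x = s := by
  rw [← h.1.1, h.dist_eq hs ⟨le_rfl, dist_nonneg⟩, sub_zero, abs_of_nonneg hs.1]

lemma dist_right (h : IsGeodesicSegment γ x y) (hs : s ∈ Icc 0 (dist x y)) :
    dist (γ s) y = dist x y - s := by
  have hy := h.dist_eq hs ⟨dist_nonneg, le_rfl⟩
  rw [h.2] at hy
  rw [hy, abs_of_nonpos (by linarith [hs.2]), neg_sub]

lemma gp_eq (h : IsGeodesicSegment γ x y) (hs : s ∈ Icc 0 (dist x y)) : gp x (γ s) y = s := by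
  unfold gp; rw [h.dist_left hs, h.dist_right hs, dist_comm y x]; ring

lemma dist_left_le {p : Z} (h : IsGeodesicSegment γ x y) (hp : p ∈ γ '' Icc 0 (dist x y)) :
    dist p x ≤ dist x y := by
  obtain ⟨s, hs, rfl⟩ := hp
  rw [h.dist_left hs]; exact hs.2

lemma dist_right_le {p : Z} (h : IsGeodesicSegment γ x y) (hp : p ∈ γ '' Icc 0 (dist x y)) :
    dist p y ≤ dist x y := by
  obtain ⟨s, hs, rfl⟩ := hp
  rw [h.dist_right hs]; linarith [hs.1]

lemma symm (h : IsGeodesicSegment γ x y) :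
    IsGeodesicSegment (fun t => γ (dist x y - t)) y x := by
  have hL := dist_comm y x
  refine ⟨⟨by simpa using h.2, fun s hs t ht => ?_⟩, by simpa [hL] using h.1.1⟩
  rw [hL] at hs ht
  rw [h.dist_eq ⟨by linarith [hs.2], by linarith [hs.1]⟩ ⟨by linarith [ht.2], by linarith [ht.1]⟩,
    ← abs_neg]
  ring_nf

lemma restrict (h : IsGeodesicSegment γ x y) (hr : r ∈ Icc 0 (dist x y))
    (hs : s ∈ Icc 0 (dist x y)) (hrs : r ≤ s) :
    IsGeodesicSegment (fun t => γ (r + t)) (γ r) (γ s) := by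
  have hL : dist (γ r) (γ s) = s - r := by
    rw [h.dist_eq hr hs, abs_sub_comm, abs_of_nonneg (by linarith)]
  refine ⟨⟨by simp, fun u hu v hv => ?_⟩, by rw [hL]; ring_nf⟩
  rw [hL] at hu hv
  rw [h.dist_eq ⟨by linarith [hr.1, hu.1], by linarith [hu.2, hs.2]⟩
    ⟨by linarith [hr.1, hv.1], by linarith [hv.2, hs.2]⟩]
  ring_nf

lemma continuousOn (h : IsGeodesicSegment γ x y) : ContinuousOn γ (Icc 0 (dist x y)) :=
  (LipschitzOnWith.of_dist_le_mul (K := 1) fun s hs t ht => by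
    rw [h.dist_eq hs ht, NNReal.coe_one, one_mul, Real.dist_eq]).continuousOn

/-- Used with `γ rs` a point of `γ` farthest from `C`, at distance `E`: walking back `3E` along
`γ` (or to its start) gives a point that is `E`-close to `C` and, even after this detour of
length `E`, still `E`-far from `γ rs`. -/
lemma exists_anchor (hγ : IsGeodesicSegment γ x y)
    {C : Set Z} (hx : x ∈ C) {E rs : ℝ} (hE : 0 ≤ E) (hrs : rs ∈ Icc 0 (dist x y))
    (hcover : ∀ p ∈ γ '' Icc 0 (dist x y), ∃ c ∈ C, dist p c ≤ E)
    (hfar : ∀ c ∈ C, E ≤ dist (γ rs) c) :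
    ∃ r ∈ Icc 0 rs, ∃ z ∈ C, dist (γ r) z ≤ E ∧ dist (γ rs) (γ r) ≤ 3 * E ∧
      E ≤ dist (γ rs) (γ r) - dist (γ r) z := by
  rcases le_total rs (3 * E) with hsmall | hbig
  · refine ⟨0, ⟨le_rfl, hrs.1⟩, x, hx, ?_⟩
    rw [hγ.1.1, dist_self, hγ.dist_left hrs]
    exact ⟨hE, hsmall, by linarith [hγ.dist_left hrs ▸ hfar x hx]⟩
  · have hr : rs - 3 * E ∈ Icc 0 (dist x y) := ⟨by linarith, by linarith [hrs.2]⟩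
    obtain ⟨z, hz, hdz⟩ := hcover _ (mem_image_of_mem γ hr)
    have hd : dist (γ rs) (γ (rs - 3 * E)) = 3 * E := by
      rw [hγ.dist_eq hrs hr, sub_sub_cancel, abs_of_nonneg (by linarith)]
    exact ⟨rs - 3 * E, ⟨by linarith, by linarith⟩, z, hz, hdz, hd.le, by linarith⟩

end IsGeodesicSegment

end GeodesicSegment

lemma logb_two_le_four_mul_sqrt {x : ℝ} (hx : 0 ≤ x) : Real.logb 2 x ≤ 4 * √x := by
  have hlog : Real.log x ≤ 2 * √x := by
    have h := Real.log_le_rpow_div hx (by norm_num : (0 : ℝ) < 1 / 2)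
    rwa [← Real.sqrt_eq_rpow, div_div_eq_mul_div, div_one, mul_comm] at h
  have hlog2 : 1 / 2 < Real.log 2 := by linarith [Real.log_two_gt_d9]
  rw [Real.logb, div_le_iff₀ (by linarith)]
  rcases le_total (Real.log x) 0 with h | h <;> nlinarith [Real.sqrt_nonneg x]

lemma exists_le_of_le_add_mul_logb {a b c d : ℝ} (hb : 0 ≤ b) (hc : 0 ≤ c) (hd : 0 ≤ d) :
    ∃ E₀, ∀ E, 0 ≤ E → E ≤ a + b * Real.logb 2 (c * E + d) → E ≤ E₀ := by
  refine ⟨a + 4 * b * √(2 * (c * a + d) + (4 * b * c) ^ 2), fun E hE hEle => ?_⟩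
  set s := √(c * E + d)
  have hs : s ^ 2 = c * E + d := Real.sq_sqrt (by positivity)
  have hEs : E ≤ a + 4 * b * s := by
    nlinarith [logb_two_le_four_mul_sqrt (x := c * E + d) (by positivity)]
  have hsT : s ≤ √(2 * (c * a + d) + (4 * b * c) ^ 2) :=
    (le_abs_self s).trans (Real.abs_le_sqrt (by nlinarith [sq_nonneg (s - 4 * b * c)]))
  nlinarith

lemma exists_nat_two_pow_ge_and_le_logb {M : ℝ} (hM : 1 ≤ M) :
    ∃ n : ℕ, M ≤ 2 ^ n ∧ (n : ℝ) ≤ Real.logb 2 M + 1 := by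
  refine ⟨⌈Real.logb 2 M⌉₊, ?_, (Nat.ceil_lt_add_one (Real.logb_nonneg one_lt_two hM)).le⟩
  calc M = 2 ^ Real.logb 2 M := (Real.rpow_logb two_pos (by norm_num) (by linarith)).symm
    _ ≤ 2 ^ (⌈Real.logb 2 M⌉₊ : ℝ) := Real.rpow_le_rpow_of_exponent_le one_le_two (Nat.le_ceil _)
    _ = 2 ^ ⌈Real.logb 2 M⌉₊ := Real.rpow_natCast 2 _

namespace IsDeltaHyperbolic

variable {Z : Type*} [MetricSpace Z] {δ : ℝ}

lemma dist_le_of_le_gp (hZ : IsDeltaHyperbolic Z δ) {c x z : Z} {γ σ : ℝ → Z}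
    (hγ : IsGeodesicSegment γ c x) (hσ : IsGeodesicSegment σ c z) {t : ℝ} (ht0 : 0 ≤ t)
    (ht : t ≤ gp c x z) : dist (γ t) (σ t) ≤ δ := by
  have htx : t ∈ Icc 0 (dist c x) := ⟨ht0, dist_comm x c ▸ ht.trans (gp_le_dist_left c x z)⟩
  have htz : t ∈ Icc 0 (dist c z) := ⟨ht0, dist_comm z c ▸ ht.trans (gp_le_dist_right c x z)⟩
  have hxσ : t - δ / 4 ≤ gp c x (σ t) :=
    hZ.sub_le_gp ht (by rw [gp_comm, hσ.gp_eq htz])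
  have hγσ : t - δ / 4 - δ / 4 ≤ gp c (γ t) (σ t) :=
    hZ.sub_le_gp (by rw [hγ.gp_eq htx]; linarith [hZ.nonneg c]) hxσ
  unfold gp at hγσ
  rw [hγ.dist_left htx, hσ.dist_left htz] at hγσ
  linarith

lemma exists_dist_le_of_mem_segment (hZ : IsDeltaHyperbolic Z δ) {u v z : Z}
    {σ α β : ℝ → Z} (hσ : IsGeodesicSegment σ u v) (hα : IsGeodesicSegment α u z)
    (hβ : IsGeodesicSegment β z v) {p : Z} (hp : p ∈ σ '' Icc 0 (dist u v)) :
    ∃ q ∈ α '' Icc 0 (dist u z) ∪ β '' Icc 0 (dist z v), dist p q ≤ δ := by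
  obtain ⟨r, hr, rfl⟩ := hp
  rcases le_or_gt r (gp u v z) with hrz | hzr
  · refine ⟨α r, Or.inl ⟨r, ⟨hr.1, ?_⟩, rfl⟩, hZ.dist_le_of_le_gp hσ hα hr.1 hrz⟩
    exact dist_comm z u ▸ hrz.trans (gp_le_dist_right u v z)
  · have hswap := gp_add_gp_swap u v z
    have hr' : dist u v - r ≤ gp v u z := by linarith
    have hfel := hZ.dist_le_of_le_gp hσ.symm hβ.symm (t := dist u v - r) (by linarith [hr.2]) hr'
    simp only [sub_sub_cancel] at hfel
    refine ⟨_, Or.inr ?_, hfel⟩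
    rw [← image_comp_const_sub_Icc β]
    exact ⟨dist u v - r, ⟨by linarith [hr.2],
      by linarith [gp_le_dist_right v u z, dist_comm z v]⟩, rfl⟩

/-- Bisect the chain and use thin triangles. -/
lemma exists_dist_chain_le_of_sub_le_two_pow (hZ : IsDeltaHyperbolic Z δ)
    (hgeo : IsGeodesicSpace Z) {Λ : ℝ} {c : ℕ → Z} (hc : ∀ k, dist (c k) (c (k + 1)) ≤ Λ)
    (n : ℕ) : ∀ i j, i ≤ j → j - i ≤ 2 ^ n → ∀ τ, IsGeodesicSegment τ (c i) (c j) →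
      ∀ p ∈ τ '' Icc 0 (dist (c i) (c j)), ∃ k ≤ j, dist p (c k) ≤ n * δ + Λ := by
  induction n with
  | zero =>
    intro i j hij hji τ hτ p hp
    refine ⟨i, hij, ?_⟩
    have hstep : dist (c i) (c j) ≤ Λ := by
      obtain rfl | rfl : j = i ∨ j = i + 1 := by omega
      · exact (dist_self (c j)).symm ▸ dist_nonneg.trans (hc j)
      · exact hc i
    simpa using (hτ.dist_left_le hp).trans hstep
  | succ n ih =>
    intro i j hij hji τ hτ p hp
    set m := min (i + 2 ^ n) j
    obtain ⟨α, hα⟩ := hgeo.exists_isGeodesicSegment (c i) (c m)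
    obtain ⟨β, hβ⟩ := hgeo.exists_isGeodesicSegment (c m) (c j)
    obtain ⟨q, hq, hpq⟩ := hZ.exists_dist_le_of_mem_segment hτ hα hβ hp
    obtain ⟨k, hk, hqk⟩ : ∃ k ≤ j, dist q (c k) ≤ n * δ + Λ := by
      rcases hq with hq | hq
      · obtain ⟨k, hk, hqk⟩ := ih i m (by omega) (by omega) α hα q hq
        exact ⟨k, hk.trans (min_le_right _ _), hqk⟩
      · exact ih m j (min_le_right _ _) (by rw [pow_succ] at hji; omega) β hβ q hq
    refine ⟨k, hk, ?_⟩
    push_cast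
    linarith [dist_triangle p q (c k)]

lemma exists_dist_chain_le_of_abs_sub_le (hZ : IsDeltaHyperbolic Z δ)
    (hgeo : IsGeodesicSpace Z) (hδ : 0 ≤ δ) {Λ : ℝ} {c : ℕ → Z}
    (hc : ∀ k, dist (c k) (c (k + 1)) ≤ Λ) {M : ℝ} (hM : 1 ≤ M) {i j : ℕ}
    (hij : |(i : ℝ) - j| ≤ M) {τ : ℝ → Z} (hτ : IsGeodesicSegment τ (c i) (c j)) {p : Z}
    (hp : p ∈ τ '' Icc 0 (dist (c i) (c j))) :
    ∃ k ≤ max i j, dist p (c k) ≤ (Real.logb 2 M + 1) * δ + Λ := by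
  obtain ⟨n, hMn, hn⟩ := exists_nat_two_pow_ge_and_le_logb hM
  have hnδ : n * δ + Λ ≤ (Real.logb 2 M + 1) * δ + Λ := by gcongr
  have hgap : ∀ {i j : ℕ}, i ≤ j → |(i : ℝ) - j| ≤ M → j - i ≤ 2 ^ n := fun {i j} hle h => by
    rw [abs_sub_comm, abs_of_nonneg (sub_nonneg.2 (by exact_mod_cast hle))] at h
    exact_mod_cast (show ((j - i : ℕ) : ℝ) ≤ 2 ^ n by push_cast [hle]; linarith)
  rcases le_total i j with hle | hle
  · obtain ⟨k, hk, hpk⟩ := hZ.exists_dist_chain_le_of_sub_le_two_pow hgeo hc n i j hle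
      (hgap hle hij) τ hτ p hp
    exact ⟨k, hk.trans (le_max_right i j), hpk.trans hnδ⟩
  · have hp' : p ∈ (fun t => τ (dist (c i) (c j) - t)) '' Icc 0 (dist (c j) (c i)) := by
      rwa [dist_comm (c j), image_comp_const_sub_Icc]
    obtain ⟨k, hk, hpk⟩ := hZ.exists_dist_chain_le_of_sub_le_two_pow hgeo hc n j i hle
      (hgap hle (abs_sub_comm (i : ℝ) j ▸ hij)) _ hτ.symm p hp'
    exact ⟨k, hk.trans (le_max_left i j), hpk.trans hnδ⟩

/-- `w` is too far from the short sides `[w₁, z₁]` and `[z₂, w₂]` to be near them, so thinness of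
the triangles `w₁ w₂ z₂` and `w₁ z₂ z₁` puts it near `[z₁, z₂]`. -/
lemma exists_dist_le_two_mul_of_mem_segment (hZ : IsDeltaHyperbolic Z δ)
    (hgeo : IsGeodesicSpace Z) {w₁ w₂ z₁ z₂ w : Z} {σ : ℝ → Z}
    (hσ : IsGeodesicSegment σ w₁ w₂) (hw : w ∈ σ '' Icc 0 (dist w₁ w₂)) {E : ℝ}
    (hδE : 2 * δ < E) (h₁ : E ≤ dist w w₁ - dist w₁ z₁) (h₂ : E ≤ dist w w₂ - dist w₂ z₂)
    {γ : ℝ → Z} (hγ : IsGeodesicSegment γ z₁ z₂) :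
    ∃ q ∈ γ '' Icc 0 (dist z₁ z₂), dist w q ≤ 2 * δ := by
  have hδ := hZ.nonneg w
  obtain ⟨α, hα⟩ := hgeo.exists_isGeodesicSegment w₁ z₂
  obtain ⟨β, hβ⟩ := hgeo.exists_isGeodesicSegment z₂ w₂
  obtain ⟨q₁, hq₁ | hq₁, hwq₁⟩ := hZ.exists_dist_le_of_mem_segment hσ hα hβ hw
  · obtain ⟨α', hα'⟩ := hgeo.exists_isGeodesicSegment w₁ z₁
    obtain ⟨q₂, hq₂ | hq₂, hq₁q₂⟩ := hZ.exists_dist_le_of_mem_segment hα hα' hγ hq₁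
    · linarith [hα'.dist_left_le hq₂, dist_triangle w q₂ w₁, dist_triangle w q₁ q₂,
        dist_comm q₂ w₁]
    · exact ⟨q₂, hq₂, by linarith [dist_triangle w q₁ q₂]⟩
  · linarith [hβ.dist_right_le hq₁, dist_triangle w q₁ w₂, dist_comm z₂ w₂]

lemma exists_pair_near_farthest (hZ : IsDeltaHyperbolic Z δ) (hgeo : IsGeodesicSpace Z)
    {τ : ℝ → Z} {u v : Z} (hτ : IsGeodesicSegment τ u v) {C : Set Z} (hu : u ∈ C) (hv : v ∈ C)
    {E rs : ℝ} (hδE : 2 * δ < E) (hrs : rs ∈ Icc 0 (dist u v))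
    (hcover : ∀ p ∈ τ '' Icc 0 (dist u v), ∃ c ∈ C, dist p c ≤ E)
    (hfar : ∀ c ∈ C, E ≤ dist (τ rs) c) :
    ∃ z₁ ∈ C, ∃ z₂ ∈ C, dist z₁ z₂ ≤ 8 * E ∧ ∀ γ, IsGeodesicSegment γ z₁ z₂ →
      ∃ q ∈ γ '' Icc 0 (dist z₁ z₂), dist (τ rs) q ≤ 2 * δ := by
  have hE : 0 ≤ E := by linarith [hZ.nonneg u]
  obtain ⟨r₁, hr₁, z₁, hz₁, hz₁E, hw₁, hfar₁⟩ := hτ.exists_anchor hu hE hrs hcover hfar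
  have hcover' :
      ∀ p ∈ (fun t => τ (dist u v - t)) '' Icc 0 (dist v u), ∃ c ∈ C, dist p c ≤ E := by
    rwa [dist_comm v u, image_comp_const_sub_Icc]
  obtain ⟨r₂, hr₂, z₂, hz₂, hz₂E, hw₂, hfar₂⟩ := hτ.symm.exists_anchor hv hE (rs := dist u v - rs)
    ⟨by linarith [hrs.2], by rw [dist_comm]; linarith [hrs.1]⟩ hcover'
    (by simpa only [sub_sub_cancel] using hfar)
  simp only [sub_sub_cancel] at hw₂ hfar₂
  have hr₂' : dist u v - r₂ ∈ Icc 0 (dist u v) :=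
    ⟨by linarith [hr₂.2, hrs.1], by linarith [hr₂.1]⟩
  have hτ₁₂ := hτ.restrict ⟨hr₁.1, hr₁.2.trans hrs.2⟩ hr₂'
    (show r₁ ≤ dist u v - r₂ by linarith [hr₁.2, hr₂.2])
  have hw : τ rs ∈ (fun t => τ (r₁ + t)) '' Icc 0 (dist (τ r₁) (τ (dist u v - r₂))) := by
    refine ⟨rs - r₁, ⟨by linarith [hr₁.2], ?_⟩, by simp⟩
    rw [hτ.dist_eq ⟨hr₁.1, hr₁.2.trans hrs.2⟩ hr₂',
      abs_sub_comm, abs_of_nonneg (by linarith [hr₁.2, hr₂.2])]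
    linarith [hr₂.2]
  refine ⟨z₁, hz₁, z₂, hz₂, ?_, fun γ hγ =>
    hZ.exists_dist_le_two_mul_of_mem_segment hgeo hτ₁₂ hw hδE hfar₁ hfar₂ hγ⟩
  linarith [dist_triangle z₁ (τ r₁) (τ rs), dist_triangle z₁ (τ rs) z₂,
    dist_triangle (τ rs) (τ (dist u v - r₂)) z₂, dist_comm z₁ (τ r₁), dist_comm (τ rs) (τ r₁)]

lemma le_of_farthest_from_quasiChain (hZ : IsDeltaHyperbolic Z δ) (hgeo : IsGeodesicSpace Z)
    {Λ l μ : ℝ} (hl : 0 < l) (hμ : 0 ≤ μ) {y : ℕ → Z} {K : ℕ}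
    (hstep : ∀ k, dist (y k) (y (k + 1)) ≤ Λ)
    (hlow : ∀ j ≤ K, ∀ k ≤ K, l * (|(j : ℝ) - k| - 1) - μ ≤ dist (y j) (y k))
    {τ : ℝ → Z} (hτ : IsGeodesicSegment τ (y 0) (y K)) {E rs : ℝ} (hδE : 2 * δ < E)
    (hrs : rs ∈ Icc 0 (dist (y 0) (y K)))
    (hcover : ∀ p ∈ τ '' Icc 0 (dist (y 0) (y K)), ∃ c ∈ y '' Iic K, dist p c ≤ E)
    (hfar : ∀ c ∈ y '' Iic K, E ≤ dist (τ rs) c) :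
    E ≤ 3 * δ + Λ + δ * Real.logb 2 (8 / l * E + (μ / l + 1)) := by
  have hδ := hZ.nonneg (y 0)
  obtain ⟨_, ⟨k₁, hk₁, rfl⟩, _, ⟨k₂, hk₂, rfl⟩, hk₁k₂, hnear⟩ :=
    hZ.exists_pair_near_farthest hgeo hτ (C := y '' Iic K) ⟨0, Nat.zero_le K, rfl⟩
      ⟨K, (le_refl K : K ≤ K), rfl⟩ hδE hrs hcover hfar
  obtain ⟨γ, hγ⟩ := hgeo.exists_isGeodesicSegment (y k₁) (y k₂)
  obtain ⟨q, hq, hwq⟩ := hnear γ hγ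
  have hM : 1 ≤ 8 / l * E + (μ / l + 1) := by
    have : 0 ≤ 8 / l * E + μ / l := by
      have : 0 ≤ E := by linarith
      positivity
    linarith
  have hgap : |(k₁ : ℝ) - k₂| ≤ 8 / l * E + (μ / l + 1) := by
    have h := (hlow k₁ hk₁ k₂ hk₂).trans hk₁k₂
    have : |(k₁ : ℝ) - k₂| - 1 ≤ (8 * E + μ) / l := (le_div_iff₀' hl).2 (by linarith)
    rw [add_div] at this
    linarith [show 8 * E / l = 8 / l * E by ring]
  obtain ⟨k, hk, hqk⟩ := hZ.exists_dist_chain_le_of_abs_sub_le hgeo hδ hstep hM hgap hγ hq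
  have hfark := hfar (y k) ⟨k, mem_Iic.2 (hk.trans (max_le hk₁ hk₂)), rfl⟩
  linarith [dist_triangle (τ rs) q (y k)]

/-- Morse lemma for discrete quasi-geodesics. A point of the geodesic farthest from the chain,
at distance `E`, satisfies `E ≤ 3δ + Λ + δ log₂ (8E / l + μ / l + 1)`, which bounds `E`. -/
theorem exists_forall_near_quasiChain (hZ : IsDeltaHyperbolic Z δ) (hgeo : IsGeodesicSpace Z)
    (hδ : 0 ≤ δ) {Λ l μ : ℝ} (hl : 0 < l) (hμ : 0 ≤ μ) :
    ∃ D₀, ∀ (y : ℕ → Z) (K : ℕ), (∀ k, dist (y k) (y (k + 1)) ≤ Λ) →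
      (∀ j ≤ K, ∀ k ≤ K, l * (|(j : ℝ) - k| - 1) - μ ≤ dist (y j) (y k)) →
      ∀ τ, IsGeodesicSegment τ (y 0) (y K) →
      ∀ p ∈ τ '' Icc 0 (dist (y 0) (y K)), ∃ k ≤ K, dist p (y k) ≤ D₀ := by
  obtain ⟨E₀, hE₀⟩ := exists_le_of_le_add_mul_logb (a := 3 * δ + Λ) hδ
    (by positivity : (0 : ℝ) ≤ 8 / l) (by positivity : (0 : ℝ) ≤ μ / l + 1)
  refine ⟨max E₀ (2 * δ), fun y K hstep hlow τ hτ => ?_⟩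
  obtain ⟨_, ⟨rs, hrs, rfl⟩, E, hcover, hfar⟩ := exists_farthest_point
    (isCompact_Icc.image_of_continuousOn hτ.continuousOn)
    ⟨τ 0, 0, ⟨le_rfl, dist_nonneg⟩, rfl⟩ ((finite_Iic K).image y).isCompact
    ⟨y 0, 0, Nat.zero_le K, rfl⟩
  have hE : E ≤ max E₀ (2 * δ) := by
    by_contra! h
    have hδE : 2 * δ < E := (le_max_right _ _).trans_lt h
    have := hE₀ E (by linarith) (hZ.le_of_farthest_from_quasiChain hgeo hl hμ hstep hlow hτ hδE
      hrs hcover hfar)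
    linarith [le_max_left E₀ (2 * δ)]
  intro p hp
  obtain ⟨_, ⟨k, hk, rfl⟩, hpk⟩ := hcover p hp
  exact ⟨k, hk, hpk.trans hE⟩

end IsDeltaHyperbolic

section SequentialBoundary

variable {Z : Type*} [MetricSpace Z] {a : Z} {x y z : ℕ → Z}

lemma SeqEquiv.symm (h : SeqEquiv a x y) : SeqEquiv a y x := by
  have hswap : Tendsto Prod.swap (atTop : Filter (ℕ × ℕ)) atTop :=
    tendsto_atTop_atTop.2 fun p => ⟨p.swap, fun q hq => ⟨hq.2, hq.1⟩⟩
  simpa [SeqEquiv, Function.comp_def, gp_comm a (y _)] using h.comp hswap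

lemma SeqEquiv.trans {δ : ℝ} (hZ : IsDeltaHyperbolic Z δ) (hxy : SeqEquiv a x y)
    (hyz : SeqEquiv a y z) : SeqEquiv a x z := by
  refine tendsto_atTop_atTop.2 fun C => ?_
  obtain ⟨⟨i₁, j₁⟩, h₁⟩ := tendsto_atTop_atTop.1 hxy (C + δ / 4)
  obtain ⟨⟨i₂, j₂⟩, h₂⟩ := tendsto_atTop_atTop.1 hyz (C + δ / 4)
  refine ⟨(i₁, j₂), fun p hp => ?_⟩
  have := hZ.sub_le_gp (h₁ (p.1, max j₁ i₂) ⟨hp.1, le_max_left _ _⟩)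
    (h₂ (max j₁ i₂, p.2) ⟨le_max_right _ _, hp.2⟩)
  simp only at this ⊢
  linarith

/-- `Boundary` is a `Quot`, not a `Quotient`: equality of classes yields `SeqEquiv` only through
a `Quot.lift`, which needs transitivity of `SeqEquiv`, i.e. hyperbolicity. -/
lemma SeqEquiv.of_bpt_eq {δ : ℝ} (hZ : IsDeltaHyperbolic Z δ) (hx : ConvSeq a x)
    (hy : ConvSeq a y) (h : bpt a x hx = bpt a y hy) : SeqEquiv a x y := by
  have hP : Quot.lift (fun s : BSeq a => SeqEquiv a x s.1)
      (fun s t hst => propext ⟨fun h' => h'.trans hZ hst, fun h' => h'.trans hZ hst.symm⟩)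
      (bpt a x hx) := hx
  rwa [h] at hP

lemma ConvSeq.map {Z' : Type*} [MetricSpace Z'] {f : Z → Z'} {l C : ℝ} (hl : 0 < l)
    (hf : ∀ x₁ x₂, l * gp a x₁ x₂ - C ≤ gp (f a) (f x₁) (f x₂)) (hx : ConvSeq a x) :
    ConvSeq (f a) (f ∘ x) :=
  tendsto_atTop_mono (fun p => hf (x p.1) (x p.2))
    (tendsto_atTop_add_const_right _ (-C) (hx.const_mul_atTop hl))

end SequentialBoundary

namespace IsRay

variable {Z : Type*} [MetricSpace Z] {η : ℝ → Z} {b : Z} {s t : ℝ}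

lemma dist_eq (hη : IsRay η b) (hs : 0 ≤ s) : dist (η s) b = s := by
  rw [← hη.1, hη.2 s hs 0 (le_refl (0 : ℝ)), sub_zero, abs_of_nonneg hs]

lemma gp_eq_min (hη : IsRay η b) (hs : 0 ≤ s) (ht : 0 ≤ t) : gp b (η s) (η t) = min s t := by
  unfold gp
  rw [hη.dist_eq hs, hη.dist_eq ht, hη.2 s hs t ht]
  rcases le_total s t with h | h
  · rw [abs_of_nonpos (by linarith), min_eq_left h]; ring
  · rw [abs_of_nonneg (by linarith), min_eq_right h]; ring

lemma isGeodesicSegment (hη : IsRay η b) (ht : 0 ≤ t) : IsGeodesicSegment η b (η t) := by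
  rw [IsGeodesicSegment, dist_comm, hη.dist_eq ht]
  exact ⟨⟨hη.1, fun s hs u hu => hη.2 s hs.1 u hu.1⟩, rfl⟩

lemma convSeq (hη : IsRay η b) : ConvSeq b (fun n : ℕ => η n) := by
  refine tendsto_atTop_atTop.2 fun C => ⟨(⌈C⌉₊, ⌈C⌉₊), fun p hp => ?_⟩
  simp only
  rw [hη.gp_eq_min (Nat.cast_nonneg _) (Nat.cast_nonneg _)]
  exact le_min ((Nat.le_ceil C).trans (by exact_mod_cast hp.1))
    ((Nat.le_ceil C).trans (by exact_mod_cast hp.2))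

lemma dist_le_of_gpPointRay {δ D : ℝ} (hZ : IsDeltaHyperbolic Z δ) (hD : 0 ≤ D)
    (hη : IsRay η b) {y : Z} (hy : gpPointRay b y η > dist y b - D) :
    dist y (η (dist y b)) ≤ 2 * D + δ / 2 := by
  set R := dist y b
  have hR : 0 ≤ R := dist_nonneg
  have hbdd : IsBoundedUnder (· ≥ ·) atTop (fun n : ℕ => gp b y (η n)) :=
    ⟨0, eventually_map.2 (Eventually.of_forall fun n => gp_nonneg b y (η n))⟩
  obtain ⟨n, hn⟩ := ((eventually_lt_of_lt_liminf hy hbdd).and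
    (eventually_ge_atTop ⌈R⌉₊)).exists
  have hRn : R ≤ n := (Nat.le_ceil R).trans (by exact_mod_cast hn.2)
  have hgp := hZ.sub_le_gp (t := R - D) hn.1.le
    (by rw [hη.gp_eq_min (Nat.cast_nonneg n) hR, min_eq_right hRn]; linarith)
  unfold gp at hgp
  rw [hη.dist_eq hR] at hgp
  linarith

end IsRay

section Radial

lemma abs_min_add_sub_min_add_le (s L u v : ℝ) : |min (s + u) L - min (s + v) L| ≤ |u - v| := by
  simpa using abs_min_sub_min_le_max (s + u) L (s + v) L

lemma sub_sub_one_le_min_add_sub_min_add {s L u v : ℝ} (hv : v ≤ L - s + 1) :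
    v - u - 1 ≤ min (s + v) L - min (s + u) L := by
  have : s + v - 1 ≤ min (s + v) L := le_min (by linarith) (by linarith)
  linarith [min_le_left (s + u) L]

lemma abs_sub_sub_one_le_abs_min_add_sub_min_add {s L u v : ℝ} (hu : u ≤ L - s + 1)
    (hv : v ≤ L - s + 1) : |u - v| - 1 ≤ |min (s + u) L - min (s + v) L| := by
  rcases le_total u v with h | h
  · rw [abs_sub_comm u, abs_sub_comm _ (min (s + v) L), abs_of_nonneg (by linarith)]
    exact (sub_sub_one_le_min_add_sub_min_add hv).trans (le_abs_self _)
  · rw [abs_of_nonneg (by linarith)]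
    exact (sub_sub_one_le_min_add_sub_min_add hu).trans (le_abs_self _)

variable {X : Type*} [MetricSpace X] {Y : Type*} [MetricSpace Y] {f : X → Y} {a x : X}
  {γ : ℝ → X} {s : ℝ}

lemma min_add_mem_Icc (hs : s ∈ Icc 0 (dist a x)) (u : ℝ) (hu : 0 ≤ u) :
    min (s + u) (dist a x) ∈ Icc 0 (dist a x) :=
  ⟨le_min (by linarith [hs.1]) dist_nonneg, min_le_right _ _⟩

lemma IsLSL.dist_chain_le {l μ : ℝ} (hf : IsLSL f l μ) (hl : 0 ≤ l)
    (hγ : IsGeodesicSegment γ a x) (hs : s ∈ Icc 0 (dist a x)) (k : ℕ) :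
    dist (f (γ (min (s + k) (dist a x)))) (f (γ (min (s + (k + 1 : ℕ)) (dist a x)))) ≤ l + μ := by
  refine (hf _ _).trans ?_
  rw [hγ.dist_eq (min_add_mem_Icc hs _ (Nat.cast_nonneg _))
    (min_add_mem_Icc hs _ (Nat.cast_nonneg _))]
  have h := abs_min_add_sub_min_add_le s (dist a x) k (k + 1 : ℕ)
  rw [Nat.cast_succ, sub_add_cancel_left, abs_neg, abs_one, ← Nat.cast_succ] at h
  linarith [mul_le_mul_of_nonneg_left h hl]

lemma IsRadialWith.le_dist_chain {l μ : ℝ} (hf : IsRadialWith f a l μ) (hl : 0 ≤ l)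
    (hγ : IsGeodesicSegment γ a x) (hs : s ∈ Icc 0 (dist a x)) {j k : ℕ}
    (hj : j ≤ ⌈dist a x - s⌉₊) (hk : k ≤ ⌈dist a x - s⌉₊) :
    l * (|(j : ℝ) - k| - 1) - μ ≤
      dist (f (γ (min (s + j) (dist a x)))) (f (γ (min (s + k) (dist a x)))) := by
  have hmj := min_add_mem_Icc hs _ (Nat.cast_nonneg j)
  have hmk := min_add_mem_Icc hs _ (Nat.cast_nonneg k)
  have hK : ((⌈dist a x - s⌉₊ : ℕ) : ℝ) ≤ dist a x - s + 1 :=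
    (Nat.ceil_lt_add_one (by linarith [hs.2])).le
  have h := hf _ dist_nonneg γ hγ.1 _ hmj _ hmk
  rw [hγ.dist_eq hmj hmk] at h
  have habs := abs_sub_sub_one_le_abs_min_add_sub_min_add (s := s) (L := dist a x)
    (u := j) (v := k) (by linarith [(Nat.cast_le (α := ℝ)).2 hj])
    (by linarith [(Nat.cast_le (α := ℝ)).2 hk])
  linarith [mul_le_mul_of_nonneg_left habs hl]

lemma IsRadialWith.sub_le_dist {l μ : ℝ} (hf : IsRadialWith f a l μ)
    (hγ : IsGeodesicSegment γ a x) (hs : s ∈ Icc 0 (dist a x)) :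
    l * s - μ ≤ dist (f (γ s)) (f a) := by
  have h := hf _ dist_nonneg γ hγ.1 s hs 0 ⟨le_rfl, dist_nonneg⟩
  rwa [hγ.dist_eq hs ⟨le_rfl, dist_nonneg⟩, sub_zero, abs_of_nonneg hs.1, hγ.1.1] at h

def GeodesicsNearImage (f : X → Y) (a : X) (D₀ : ℝ) : Prop :=
  ∀ x γ, IsGeodesicSegment γ a x → ∀ s ∈ Icc 0 (dist a x),
    ∀ τ, IsGeodesicSegment τ (f (γ s)) (f x) →
    ∀ p ∈ τ '' Icc 0 (dist (f (γ s)) (f x)), ∃ u ∈ Icc s (dist a x), dist p (f (γ u)) ≤ D₀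

/-- `f ∘ γ`, sampled at unit steps, is a discrete quasi-geodesic: apply the Morse lemma. -/
lemma Radial.exists_geodesicsNearImage {δ : ℝ} (hY : IsDeltaHyperbolic Y δ)
    (hgY : IsGeodesicSpace Y) (hf : Radial f a) : ∃ D₀, GeodesicsNearImage f a D₀ := by
  obtain ⟨⟨l₁, μ₁, hl₁, -, hLSL⟩, l₂, μ₂, hl₂, hμ₂, hrad⟩ := hf
  obtain ⟨D₀, hD₀⟩ := hY.exists_forall_near_quasiChain hgY (hY.nonneg (f a)) (Λ := l₁ + μ₁)
    hl₂ hμ₂.le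
  refine ⟨D₀, fun x γ hγ s hs τ hτ p hp => ?_⟩
  set L := dist a x
  have hy₀ : min (s + ((0 : ℕ) : ℝ)) L = s := by simpa using hs.2
  have hyK : min (s + ((⌈L - s⌉₊ : ℕ) : ℝ)) L = L :=
    min_eq_right (by linarith [Nat.le_ceil (L - s)])
  have hγL : γ L = x := hγ.2
  obtain ⟨k, -, hk⟩ := hD₀ (fun k => f (γ (min (s + k) L))) ⌈L - s⌉₊
    (hLSL.dist_chain_le hl₁.le hγ hs) (fun j hj k hk => hrad.le_dist_chain hl₂.le hγ hs hj hk) τ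
    (by simpa only [hy₀, hyK, hγL] using hτ) p (by simpa only [hy₀, hyK, hγL] using hp)
  exact ⟨_, ⟨le_min (by linarith [(Nat.cast_nonneg k : (0 : ℝ) ≤ k)]) hs.2, min_le_right _ _⟩, hk⟩

end Radial

namespace GeodesicsNearImage

variable {X : Type*} [MetricSpace X] {Y : Type*} [MetricSpace Y] {f : X → Y} {a : X}
  {D₀ δ : ℝ}

lemma exists_dist_le (hf : GeodesicsNearImage f a D₀) (hgX : IsGeodesicSpace X) {x : X}
    {τ : ℝ → Y} (hτ : IsGeodesicSegment τ (f a) (f x)) {p : Y}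
    (hp : p ∈ τ '' Icc 0 (dist (f a) (f x))) : ∃ x₀, dist p (f x₀) ≤ D₀ := by
  obtain ⟨γ, hγ⟩ := hgX.exists_isGeodesicSegment a x
  obtain ⟨u, -, hu⟩ := hf x γ hγ 0 ⟨le_rfl, dist_nonneg⟩ τ (by rwa [hγ.1.1]) p (by rwa [hγ.1.1])
  exact ⟨γ u, hu⟩

lemma sub_le_gp (hf : GeodesicsNearImage f a D₀) (hY : IsDeltaHyperbolic Y δ)
    (hgY : IsGeodesicSpace Y) {l μ : ℝ} (hrad : IsRadialWith f a l μ) (hl : 0 ≤ l) {x : X}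
    {γ : ℝ → X} {s : ℝ} (hγ : IsGeodesicSegment γ a x) (hs : s ∈ Icc 0 (dist a x)) :
    l * s - (μ + δ + D₀) ≤ gp (f a) (f (γ s)) (f x) := by
  obtain ⟨τ, hτ⟩ := hgY.exists_isGeodesicSegment (f (γ s)) (f x)
  obtain ⟨α, hα⟩ := hgY.exists_isGeodesicSegment (f (γ s)) (f a)
  set t := gp (f (γ s)) (f a) (f x)
  have htτ : t ∈ Icc 0 (dist (f (γ s)) (f x)) :=
    ⟨gp_nonneg _ _ _, dist_comm (f x) (f (γ s)) ▸ gp_le_dist_right _ _ _⟩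
  have htα : t ∈ Icc 0 (dist (f (γ s)) (f a)) :=
    ⟨gp_nonneg _ _ _, dist_comm (f a) (f (γ s)) ▸ gp_le_dist_left _ _ _⟩
  obtain ⟨u, hu, hτu⟩ := hf x γ hγ s hs τ hτ (τ t) (mem_image_of_mem τ htτ)
  linarith [hY.dist_le_of_le_gp hα hτ htτ.1 le_rfl, hrad.sub_le_dist hγ ⟨hs.1.trans hu.1, hu.2⟩,
    hα.dist_right htα, gp_add_gp_swap (f a) (f (γ s)) (f x),
    dist_triangle4 (f (γ u)) (τ t) (α t) (f a), mul_le_mul_of_nonneg_left hu.1 hl,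
    dist_comm (f a) (f (γ s)), dist_comm (f (γ u)) (τ t), dist_comm (τ t) (α t)]

/-- Radial functions are visual, quantitatively. -/
lemma exists_sub_le_gp (hf : GeodesicsNearImage f a D₀) (hX : IsDeltaHyperbolic X δ)
    (hY : IsDeltaHyperbolic Y δ) (hgX : IsGeodesicSpace X) (hgY : IsGeodesicSpace Y)
    {l₁ μ₁ l₂ μ₂ : ℝ} (hLSL : IsLSL f l₁ μ₁) (hl₁ : 0 ≤ l₁) (hrad : IsRadialWith f a l₂ μ₂)
    (hl₂ : 0 ≤ l₂) : ∃ C, ∀ x₁ x₂, l₂ * gp a x₁ x₂ - C ≤ gp (f a) (f x₁) (f x₂) := by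
  set A := max (μ₂ + δ + D₀) (μ₂ + (l₁ * δ + μ₁) / 2)
  have hA₁ : μ₂ + δ + D₀ ≤ A := le_max_left _ _
  have hA₂ : μ₂ + (l₁ * δ + μ₁) / 2 ≤ A := le_max_right _ _
  refine ⟨A + δ / 2, fun x₁ x₂ => ?_⟩
  have hδ := hY.nonneg (f a)
  set T := gp a x₁ x₂
  obtain ⟨γ₁, hγ₁⟩ := hgX.exists_isGeodesicSegment a x₁
  obtain ⟨γ₂, hγ₂⟩ := hgX.exists_isGeodesicSegment a x₂
  have hT₁ : T ∈ Icc 0 (dist a x₁) := ⟨gp_nonneg _ _ _, dist_comm x₁ a ▸ gp_le_dist_left _ _ _⟩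
  have hT₂ : T ∈ Icc 0 (dist a x₂) := ⟨gp_nonneg _ _ _, dist_comm x₂ a ▸ gp_le_dist_right _ _ _⟩
  have hγ₁γ₂ : l₂ * T - A ≤ gp (f a) (f (γ₁ T)) (f (γ₂ T)) := by
    have := hX.dist_le_of_le_gp hγ₁ hγ₂ hT₁.1 le_rfl
    unfold gp
    linarith [hrad.sub_le_dist hγ₁ hT₁, hrad.sub_le_dist hγ₂ hT₂, hLSL (γ₁ T) (γ₂ T),
      mul_le_mul_of_nonneg_left this hl₁]
  have hx₁ : l₂ * T - A ≤ gp (f a) (f x₁) (f (γ₁ T)) := by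
    rw [gp_comm]
    linarith [hf.sub_le_gp hY hgY hrad hl₂ hγ₁ hT₁]
  have hx₂ : l₂ * T - A ≤ gp (f a) (f (γ₂ T)) (f x₂) := by
    linarith [hf.sub_le_gp hY hgY hrad hl₂ hγ₂ hT₂]
  have := hY.sub_le_gp (le_trans (by linarith) hx₁) (hY.sub_le_gp hγ₁γ₂ hx₂)
  linarith

end GeodesicsNearImage

theorem stmt13_general {X : Type*} [MetricSpace X]
    {Y : Type*} [MetricSpace Y]
    (δ : ℝ) (hX : IsDeltaHyperbolic X δ) (hY : IsDeltaHyperbolic Y δ)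
    (hgX : IsGeodesicSpace X) (hgY : IsGeodesicSpace Y)
    (f : X → Y) (a : X) (hrad : Radial f a)
    (D : ℝ) (hD : 0 < D) (hvisY : IsVisualSpace (f a) D)
    (g : Boundary a → Boundary (f a)) (hg : InducedBoundaryMap a f g)
    (hsurj : Function.Surjective g) :
    CoarselySurjective f := by
  obtain ⟨D₀, hnear⟩ := hrad.exists_geodesicsNearImage hY hgY
  obtain ⟨⟨l₁, μ₁, hl₁, -, hLSL⟩, l₂, μ₂, hl₂, -, hlow⟩ := hrad
  obtain ⟨C, hC⟩ := hnear.exists_sub_le_gp hX hY hgX hgY hLSL hl₁.le hlow hl₂.le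
  refine ⟨max 1 (2 * D + 3 * δ / 2 + D₀), lt_max_of_lt_left one_pos, fun y => ?_⟩
  set R := dist y (f a)
  obtain ⟨η, hη, hyη⟩ := hvisY y
  obtain ⟨p, hp⟩ := hsurj (bpt (f a) _ hη.convSeq)
  obtain ⟨⟨x, hx⟩, rfl⟩ := Quot.exists_rep p
  have hfx := hx.map hl₂ hC
  have hxη := SeqEquiv.of_bpt_eq hY hfx hη.convSeq ((hg x hx hfx).symm.trans hp)
  obtain ⟨⟨N, N'⟩, hN⟩ := tendsto_atTop_atTop.1 hxη R
  have hRgp : R ≤ gp (f a) (f (x N)) (η N') := hN (N, N') le_rfl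
  obtain ⟨τ, hτ⟩ := hgY.exists_isGeodesicSegment (f a) (f (x N))
  have hητ := hY.dist_le_of_le_gp (hη.isGeodesicSegment (Nat.cast_nonneg N')) hτ
    dist_nonneg (gp_comm (f a) (f (x N)) (η N') ▸ hRgp)
  obtain ⟨x₀, hx₀⟩ := hnear.exists_dist_le hgX hτ
    ⟨R, ⟨dist_nonneg, hRgp.trans (dist_comm (f (x N)) (f a) ▸ gp_le_dist_left _ _ _)⟩, rfl⟩
  have hyη' := hη.dist_le_of_gpPointRay hY hD.le hyη
  exact ⟨x₀, le_max_of_le_right (by linarith [dist_triangle4 y (η R) (τ R) (f x₀)])⟩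

/-- if `f` is radial, the induced boundary map is surjective and
`Y` is visual, then `f` is coarsely surjective. -/
theorem stmt13 {X : Type*} [MetricSpace X] [ProperSpace X]
    {Y : Type*} [MetricSpace Y] [ProperSpace Y]
    (δ : ℝ) (hX : IsDeltaHyperbolic X δ) (hY : IsDeltaHyperbolic Y δ)
    (hgX : IsGeodesicSpace X) (hgY : IsGeodesicSpace Y)
    (f : X → Y) (a : X) (hrad : Radial f a)
    (D : ℝ) (hD : 0 < D) (hvisY : IsVisualSpace (f a) D)
    (g : Boundary a → Boundary (f a)) (hg : InducedBoundaryMap a f g)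
    (hsurj : Function.Surjective g) :
    CoarselySurjective f :=
  stmt13_general δ hX hY hgX hgY f a hrad D hD hvisY g hg hsurj

end Gromov
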